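/- arXiv:math/0412343 — 2 statements merged into one kernel-verified Lean document; each statement's English description precedes it below -/
import Mathlib

section
/- Let (ω(x))_{x ∈ Z^d} be i.i.d. uniform random variables on (0,1). Then with probability one, the armour of the origin A({0})(ω) = {y ∈ Z^d : y ↑_ω 0} is a finite set. -/
open MeasureTheory ProbabilityTheory Filter Set
open scoped ENNReal Topology

attribute [local instance] Classical.propDecidable

abbrev Site (d : ℕ) := Fin d → ℤ

def supDist {d : ℕ} (x y : Site d) : ℕ :=
  Finset.univ.sup fun i => (x i - y i).natAbs

def IsPath {d : ℕ} (ν : ℕ) {n : ℕ} (p : Fin (n + 1) → Site d) : Prop :=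
  ∀ i : Fin n, supDist (p i.succ) (p i.castSucc) ≤ ν

/-- `y` influences `x` subject to `ω`: there is a path from `x` to `y` with steps of
sup-distance at most `ν` along which `ω` is strictly decreasing. -/
def Influences {d : ℕ} (ν : ℕ) (ω : Site d → ℝ) (y x : Site d) : Prop :=
  ∃ n : ℕ, ∃ p : Fin (n + 1) → Site d,
    p 0 = x ∧ p (Fin.last n) = y ∧ IsPath ν p ∧ StrictAnti fun i => ω (p i)

/-- The armour of a set `X ⊆ ℤ^d` subject to `ω`. -/
def armour {d : ℕ} (ν : ℕ) (ω : Site d → ℝ) (X : Set (Site d)) : Set (Site d) :=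
  {y | ∃ x ∈ X, Influences ν ω y x}

/-! ### Auxiliary: the uniform measure and chamber bounds -/

/-- The uniform probability measure on `(0,1)`. -/
noncomputable def unifIoo : Measure ℝ := volume.restrict (Set.Ioo (0:ℝ) 1)

instance : IsProbabilityMeasure unifIoo := ⟨by simp [unifIoo, Real.volume_Ioo]⟩

lemma chamber_meas {m : ℕ} (σ : Equiv.Perm (Fin m)) :
    MeasurableSet {v : Fin m → ℝ | StrictAnti fun i => v (σ i)} := by
  have : {v : Fin m → ℝ | StrictAnti fun i => v (σ i)}
      = ⋂ (i : Fin m), ⋂ (j : Fin m), ⋂ (_ : i < j), {v : Fin m → ℝ | v (σ j) < v (σ i)} := by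
    ext v
    simp only [Set.mem_setOf_eq, Set.mem_iInter, StrictAnti]
  rw [this]
  exact MeasurableSet.iInter fun i => MeasurableSet.iInter fun j => MeasurableSet.iInter
    fun _ => measurableSet_lt (measurable_pi_apply _) (measurable_pi_apply _)

lemma chamber_meas' (m : ℕ) : MeasurableSet {v : Fin m → ℝ | StrictAnti v} := by
  have h := chamber_meas (1 : Equiv.Perm (Fin m))
  have heq : {v : Fin m → ℝ | StrictAnti fun i => v ((1 : Equiv.Perm (Fin m)) i)}
      = {v : Fin m → ℝ | StrictAnti v} := by ext v; simp
  rwa [heq] at h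

/-- The probability that `m` i.i.d. uniform random variables appear in a fixed strict order
is at most `1/m!`. -/
lemma chamber_bound (m : ℕ) :
    (Measure.pi fun _ : Fin m => unifIoo) {v | StrictAnti v}
      ≤ ((Nat.factorial m : ℕ) : ℝ≥0∞)⁻¹ := by
  set P := Measure.pi fun _ : Fin m => unifIoo with hP
  haveI : IsProbabilityMeasure P := by
    rw [hP]; infer_instance
  set A : Equiv.Perm (Fin m) → Set (Fin m → ℝ) :=
    fun σ => {v | StrictAnti fun i => v (σ i)} with hA
  -- all chambers have equal measure
  have hkey : ∀ σ : Equiv.Perm (Fin m), P (A σ) = P (A 1) := by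
    intro σ
    have mp := measurePreserving_piCongrLeft (fun _ : Fin m => unifIoo) (σ : Fin m ≃ Fin m)
    have hpre : (MeasurableEquiv.piCongrLeft (fun _ : Fin m => ℝ) (σ : Fin m ≃ Fin m)) ⁻¹' (A σ)
        = A 1 := by
      ext v
      simp only [hA, Set.mem_preimage, Set.mem_setOf_eq]
      have : (fun i => (MeasurableEquiv.piCongrLeft (fun _ : Fin m => ℝ) (σ : Fin m ≃ Fin m)) v (σ i))
          = fun i => v i := by
        funext i
        exact MeasurableEquiv.piCongrLeft_apply_apply (β := fun _ : Fin m => ℝ)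
          (σ : Fin m ≃ Fin m) v i
      rw [this]
      rfl
    have := mp.measure_preimage (chamber_meas σ).nullMeasurableSet
    rw [hpre] at this
    exact this.symm
  -- disjointness
  have hdisj : Set.PairwiseDisjoint (Finset.univ : Finset (Equiv.Perm (Fin m))) A := by
    intro σ _ τ _ hστ
    rw [Function.onFun, Set.disjoint_left]
    intro v hvσ hvτ
    simp only [hA, Set.mem_setOf_eq] at hvσ hvτ
    have hvinj : Function.Injective v := by
      have h1 : Function.Injective (fun i => v (σ i)) := hvσ.injective
      have h2 := h1.comp σ.symm.injective
      intro a b hab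
      have := h2 (show v (σ (σ.symm a)) = v (σ (σ.symm b)) by
        simpa [Equiv.apply_symm_apply] using hab)
      simpa using congrArg σ this
    have hrange : Set.range (fun i => v (σ i)) = Set.range (fun i => v (τ i)) := by
      have h1 : Set.range (fun i => v (σ i)) = Set.range v :=
        σ.surjective.range_comp v
      have h2 : Set.range (fun i => v (τ i)) = Set.range v :=
        τ.surjective.range_comp v
      rw [h1, h2]
    have heq : (fun i => v (σ i)) = fun i => v (τ i) := (hvσ.range_inj hvτ).mp hrange
    apply hστ
    apply Equiv.ext
    intro i
    exact hvinj (congrFun heq i)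
  -- sum up
  have hsum : ∑ σ : Equiv.Perm (Fin m), P (A σ) ≤ 1 := by
    rw [← measure_biUnion_finset hdisj (fun σ _ => chamber_meas σ)]
    exact prob_le_one
  have hcard : ((Nat.factorial m : ℕ) : ℝ≥0∞) * P (A 1) ≤ 1 := by
    calc ((Nat.factorial m : ℕ) : ℝ≥0∞) * P (A 1)
        = ∑ _σ : Equiv.Perm (Fin m), P (A 1) := by
          rw [Finset.sum_const, Finset.card_univ, Fintype.card_perm, Fintype.card_fin,
            nsmul_eq_mul]
      _ = ∑ σ : Equiv.Perm (Fin m), P (A σ) :=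
          Finset.sum_congr rfl fun σ _ => (hkey σ).symm
      _ ≤ 1 := hsum
  have hA1 : A 1 = {v : Fin m → ℝ | StrictAnti v} := by
    ext v; simp [hA]
  rw [← hA1]
  rw [ENNReal.le_inv_iff_mul_le, mul_comm]
  exact hcard

/-! ### The law of a finite injective subfamily is the product of uniforms -/

lemma law_pi {d : ℕ} {Ω : Type} [MeasurableSpace Ω] {μ : Measure Ω}
    {X : Site d → Ω → ℝ}
    (hmeas : ∀ x, Measurable (X x))
    (hindep : iIndepFun X μ)
    (hunif : ∀ x, μ.map (X x) = volume.restrict (Set.Ioo (0 : ℝ) 1))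
    {n : ℕ} (y : Fin (n+1) → Site d) (hy : Function.Injective y) :
    μ.map (fun ω (i : Fin (n+1)) => X (y i) ω) = Measure.pi (fun _ => unifIoo) := by
  symm
  apply Measure.pi_eq
  intro s hs
  have hT : Measurable (fun ω (i : Fin (n+1)) => X (y i) ω) :=
    measurable_pi_lambda _ fun i => hmeas (y i)
  rw [Measure.map_apply hT (MeasurableSet.univ_pi hs)]
  have hpre : (fun ω (i : Fin (n+1)) => X (y i) ω) ⁻¹' (Set.pi Set.univ s)
      = ⋂ i ∈ (Finset.univ : Finset (Fin (n+1))), X (y i) ⁻¹' s i := by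
    ext ω; simp [Set.mem_pi]
  rw [hpre]
  -- reindex via the image finset
  have hg : ∀ i, Function.extend y s (fun _ => (Set.univ : Set ℝ)) (y i) = s i :=
    fun i => hy.extend_apply s _ i
  have hmeas' : ∀ z ∈ Finset.image y Finset.univ,
      MeasurableSet (Function.extend y s (fun _ => (Set.univ : Set ℝ)) z) := by
    intro z hz
    rw [Finset.mem_image] at hz
    obtain ⟨i, _, rfl⟩ := hz
    rw [hg i]
    exact hs i
  have hind := hindep.measure_inter_preimage_eq_mul (Finset.image y Finset.univ) hmeas'
  have hset : (⋂ z ∈ Finset.image y Finset.univ,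
        X z ⁻¹' Function.extend y s (fun _ => (Set.univ : Set ℝ)) z)
      = ⋂ i ∈ (Finset.univ : Finset (Fin (n+1))), X (y i) ⁻¹' s i := by
    ext ω
    simp only [Set.mem_iInter, Set.mem_preimage, Finset.mem_image, Finset.mem_univ, true_implies]
    constructor
    · intro h i
      have := h (y i) ⟨i, trivial, rfl⟩
      rwa [hg i] at this
    · rintro h z ⟨i, -, rfl⟩
      rw [hg i]
      exact h i
  rw [hset] at hind
  rw [hind]
  rw [Finset.prod_image (fun i _ j _ h => hy h)]
  apply Finset.prod_congr rfl
  intro i _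
  rw [hg i, ← Measure.map_apply (hmeas (y i)) (hs i), hunif (y i)]
  rfl

/-- The probability that the values of `X` along a fixed path of length `n` are strictly
decreasing is at most `1/(n+1)!`. -/
lemma path_prob_bound {d : ℕ} {Ω : Type} [MeasurableSpace Ω] {μ : Measure Ω}
    {X : Site d → Ω → ℝ}
    (hmeas : ∀ x, Measurable (X x))
    (hindep : iIndepFun X μ)
    (hunif : ∀ x, μ.map (X x) = volume.restrict (Set.Ioo (0 : ℝ) 1))
    {n : ℕ} (p : Fin (n+1) → Site d) :
    μ {ω | StrictAnti fun i => X (p i) ω} ≤ ((Nat.factorial (n+1) : ℕ) : ℝ≥0∞)⁻¹ := by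
  by_cases hp : Function.Injective p
  · have hT : Measurable (fun ω (i : Fin (n+1)) => X (p i) ω) :=
      measurable_pi_lambda _ fun i => hmeas (p i)
    have : μ {ω | StrictAnti fun i => X (p i) ω}
        = (μ.map (fun ω (i : Fin (n+1)) => X (p i) ω)) {v | StrictAnti v} := by
      rw [Measure.map_apply hT (chamber_meas' (n+1))]
      rfl
    rw [this, law_pi hmeas hindep hunif p hp]
    exact chamber_bound (n+1)
  · have : {ω | StrictAnti fun i => X (p i) ω} = ∅ := by
      rw [Set.eq_empty_iff_forall_notMem]
      intro ω hω
      apply hp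
      intro i j hij
      by_contra hne
      rcases lt_or_gt_of_ne hne with h | h
      · exact absurd (hω h) (by simp [hij])
      · exact absurd (hω h) (by simp [hij])
    simp [this]

/-! ### Combinatorial lemmas about paths -/

/-- The box of radius `R` in `ℤ^d`. -/
noncomputable def ballF (d R : ℕ) : Finset (Site d) :=
  Fintype.piFinset fun _ : Fin d => Finset.Icc (-(R:ℤ)) (R:ℤ)

lemma mem_ballF {d R : ℕ} {z : Site d} : z ∈ ballF d R ↔ ∀ i, (z i).natAbs ≤ R := by
  simp only [ballF, Fintype.mem_piFinset, Finset.mem_Icc]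
  constructor <;> intro h i <;> have := h i <;> omega

lemma coord_le_supDist {d : ℕ} (x y : Site d) (i : Fin d) :
    (x i - y i).natAbs ≤ supDist x y := by
  unfold supDist
  exact Finset.le_sup (f := fun i => (x i - y i).natAbs) (Finset.mem_univ i)

lemma supDist_triangle {d : ℕ} (x y z : Site d) :
    supDist x z ≤ supDist x y + supDist y z := by
  unfold supDist
  apply Finset.sup_le
  intro i _
  calc (x i - z i).natAbs ≤ (x i - y i).natAbs + (y i - z i).natAbs := by omega
    _ ≤ supDist x y + supDist y z := add_le_add (coord_le_supDist x y i) (coord_le_supDist y z i)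

lemma path_growth {d ν n : ℕ} {p : Fin (n+1) → Site d} (hp : IsPath ν p) :
    ∀ k : Fin (n+1), supDist (p k) (p 0) ≤ k.1 * ν := by
  intro k
  induction k using Fin.induction with
  | zero => simp [supDist]
  | succ i ih =>
    calc supDist (p i.succ) (p 0)
        ≤ supDist (p i.succ) (p i.castSucc) + supDist (p i.castSucc) (p 0) :=
          supDist_triangle _ _ _
      _ ≤ ν + i.1 * ν := add_le_add (hp i) (by simpa using ih)
      _ = i.succ.1 * ν := by rw [Fin.val_succ]; ring

/-- The bad event: a decreasing path of length `n` starting at the origin. -/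
def badEvent {d : ℕ} {Ω : Type} (ν : ℕ) (X : Site d → Ω → ℝ) (n : ℕ) : Set Ω :=
  {ω | ∃ p : Fin (n+1) → Site d, p 0 = 0 ∧ IsPath ν p ∧ StrictAnti fun i => X (p i) ω}

noncomputable def pathFinset (d ν n : ℕ) : Finset (Fin (n+1) → Site d) :=
  (Fintype.piFinset fun _ : Fin (n+1) => ballF d (n*ν)).filter
    (fun p => p 0 = 0 ∧ IsPath ν p)

lemma mem_pathFinset {d ν n : ℕ} {p : Fin (n+1) → Site d}
    (h0 : p 0 = 0) (hpath : IsPath ν p) : p ∈ pathFinset d ν n := by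
  rw [pathFinset, Finset.mem_filter]
  refine ⟨?_, h0, hpath⟩
  rw [Fintype.mem_piFinset]
  intro k
  rw [mem_ballF]
  intro i
  have h1 : (p k i - p 0 i).natAbs ≤ supDist (p k) (p 0) := coord_le_supDist _ _ _
  have h2 := path_growth hpath k
  have h3 : k.1 ≤ n := by omega
  have h4 : p 0 i = 0 := by rw [h0]; rfl
  have : k.1 * ν ≤ n * ν := Nat.mul_le_mul_right ν h3
  omega

lemma card_pathFinset {d ν n : ℕ} :
    (pathFinset d ν n).card ≤ (ballF d ν).card ^ n := by
  have hmaps : ∀ p ∈ pathFinset d ν n,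
      (fun (i : Fin n) => p i.succ - p i.castSucc) ∈ Fintype.piFinset fun _ : Fin n => ballF d ν := by
    intro p hp
    rw [pathFinset, Finset.mem_filter] at hp
    rw [Fintype.mem_piFinset]
    intro i
    rw [mem_ballF]
    intro j
    have := hp.2.2 i
    have h1 : ((p i.succ) j - (p i.castSucc) j).natAbs ≤ supDist (p i.succ) (p i.castSucc) :=
      coord_le_supDist _ _ _
    have h2 : (p i.succ - p i.castSucc) j = (p i.succ) j - (p i.castSucc) j := rfl
    rw [h2]
    omega
  have hinj : Set.InjOn (fun (p : Fin (n+1) → Site d) (i : Fin n) => p i.succ - p i.castSucc)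
      (pathFinset d ν n) := by
    intro p hp q hq hpq
    rw [Finset.mem_coe] at hp hq
    rw [pathFinset, Finset.mem_filter] at hp hq
    funext k
    induction k using Fin.induction with
    | zero => rw [hp.2.1, hq.2.1]
    | succ i ih =>
      have h := congrFun hpq i
      simp only at h
      have h2 : p i.succ - p i.castSucc = q i.succ - q i.castSucc := h
      have h3 : p i.castSucc = q i.castSucc := ih
      calc p i.succ = (p i.succ - p i.castSucc) + p i.castSucc := by ring
        _ = (q i.succ - q i.castSucc) + q i.castSucc := by rw [h2, h3]
        _ = q i.succ := by ring
  calc (pathFinset d ν n).card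
      ≤ (Fintype.piFinset fun _ : Fin n => ballF d ν).card :=
        Finset.card_le_card_of_injOn _ hmaps hinj
    _ = (ballF d ν).card ^ n := by
        rw [Fintype.card_piFinset]
        simp

/-! ### Main theorem -/

/-- with probability one the armour of the origin is finite. -/
theorem armour_origin_finite {d : ℕ} (ν : ℕ) (hν : 0 < ν) {Ω : Type}
    [MeasurableSpace Ω] (μ : Measure Ω) [IsProbabilityMeasure μ]
    (X : Site d → Ω → ℝ)
    (hmeas : ∀ x, Measurable (X x))
    (hindep : iIndepFun X μ)
    (hunif : ∀ x, μ.map (X x) = volume.restrict (Set.Ioo (0 : ℝ) 1)) :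
    ∀ᵐ ω ∂μ, (armour ν (fun x => X x ω) {(0 : Site d)}).Finite := by
  set c : ℕ := (ballF d ν).card with hc
  -- measure bound on badEvent n
  have hEbound : ∀ n, μ (badEvent ν X n)
      ≤ (c : ℝ≥0∞)^n * ((Nat.factorial (n+1) : ℕ) : ℝ≥0∞)⁻¹ := by
    intro n
    have hsub : badEvent ν X n
        ⊆ ⋃ p ∈ pathFinset d ν n, {ω | StrictAnti fun i => X (p i) ω} := by
      rintro ω ⟨p, h0, hpath, hanti⟩
      exact Set.mem_biUnion (mem_pathFinset h0 hpath) hanti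
    calc μ (badEvent ν X n)
        ≤ μ (⋃ p ∈ pathFinset d ν n, {ω | StrictAnti fun i => X (p i) ω}) :=
          measure_mono hsub
      _ ≤ ∑ p ∈ pathFinset d ν n, μ {ω | StrictAnti fun i => X (p i) ω} :=
          measure_biUnion_finset_le _ _
      _ ≤ ∑ _p ∈ pathFinset d ν n, ((Nat.factorial (n+1) : ℕ) : ℝ≥0∞)⁻¹ :=
          Finset.sum_le_sum fun p _ => path_prob_bound hmeas hindep hunif p
      _ = (pathFinset d ν n).card * ((Nat.factorial (n+1) : ℕ) : ℝ≥0∞)⁻¹ := by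
          rw [Finset.sum_const, nsmul_eq_mul]
      _ ≤ (c : ℝ≥0∞)^n * ((Nat.factorial (n+1) : ℕ) : ℝ≥0∞)⁻¹ := by
          apply mul_le_mul' _ le_rfl
          calc ((pathFinset d ν n).card : ℝ≥0∞) ≤ ((c^n : ℕ) : ℝ≥0∞) :=
                Nat.cast_le.mpr card_pathFinset
            _ = (c : ℝ≥0∞)^n := by push_cast; ring
  -- the bound tends to zero
  have hlim : Tendsto (fun n => (c : ℝ≥0∞)^n * ((Nat.factorial (n+1) : ℕ) : ℝ≥0∞)⁻¹)
      atTop (𝓝 0) := by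
    have h1 : ∀ n : ℕ, (c : ℝ≥0∞)^n * ((Nat.factorial (n+1) : ℕ) : ℝ≥0∞)⁻¹
        = ENNReal.ofReal ((c:ℝ)^n / (Nat.factorial (n+1) : ℕ)) := by
      intro n
      rw [div_eq_mul_inv, ENNReal.ofReal_mul (by positivity),
        ENNReal.ofReal_pow (by positivity), ENNReal.ofReal_inv_of_pos (by positivity),
        ENNReal.ofReal_natCast, ENNReal.ofReal_natCast]
    simp only [h1]
    rw [← ENNReal.ofReal_zero]
    apply ENNReal.tendsto_ofReal
    refine squeeze_zero (g := fun n => (c:ℝ)^n / (Nat.factorial n : ℕ))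
      (fun n => by positivity) (fun n => ?_)
      (FloorSemiring.tendsto_pow_div_factorial_atTop (c:ℝ))
    exact div_le_div_of_nonneg_left (by positivity) (by positivity)
      (by exact_mod_cast Nat.factorial_le (Nat.le_succ n))
  -- the intersection of the bad events is null
  have hinter : μ (⋂ n, badEvent ν X n) = 0 := by
    refine le_antisymm ?_ zero_le
    refine ge_of_tendsto' hlim fun n => ?_
    exact le_trans (measure_mono (Set.iInter_subset _ n)) (hEbound n)
  -- the armour-infinite event is contained in the intersection
  rw [ae_iff]
  apply measure_mono_null _ hinter
  intro ω hω
  simp only [Set.mem_setOf_eq] at hω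
  rw [Set.mem_iInter]
  intro n
  by_contra hEn
  apply hω
  apply Set.Finite.subset (ballF d (n*ν)).finite_toSet
  rintro y ⟨x, hx, m, p, hp0, hpl, hpath, hanti⟩
  rw [Set.mem_singleton_iff] at hx
  subst hx
  by_cases hmn : n ≤ m
  · exfalso
    apply hEn
    have hle : n + 1 ≤ m + 1 := by omega
    have hle' : n ≤ m := by omega
    refine ⟨fun i => p (Fin.castLE hle i), ?_, ?_, ?_⟩
    · have h0 : Fin.castLE hle (0 : Fin (n+1)) = 0 := by apply Fin.ext; simp
      simp only [h0, hp0]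
    · intro i
      have h1 : Fin.castLE hle (i.succ) = (Fin.castLE hle' i).succ := by
        apply Fin.ext; simp
      have h2 : Fin.castLE hle (i.castSucc) = (Fin.castLE hle' i).castSucc := by
        apply Fin.ext; simp
      show supDist (p (Fin.castLE hle i.succ)) (p (Fin.castLE hle i.castSucc)) ≤ ν
      rw [h1, h2]
      exact hpath _
    · intro a b hab
      apply hanti
      exact Fin.strictMono_castLE hle hab
  · -- m < n : y lies inside the ball of radius n * ν
    rw [Finset.mem_coe, mem_ballF]
    intro i
    have h1 := coord_le_supDist y (p 0) i
    have h2 : supDist (p (Fin.last m)) (p 0) ≤ m * ν := by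
      have := path_growth hpath (Fin.last m)
      simpa using this
    rw [hpl] at h2
    have h4 : p 0 i = 0 := by rw [hp0]; rfl
    have h5 : m * ν ≤ n * ν := Nat.mul_le_mul_right ν (by omega)
    omega
end

section
/- Let (ω(x))_{x ∈ Z^d} be i.i.d. uniform on (0,1) and let A_n be the event that the armour A(Λ_n^(d))(ω) is not contained in the box Λ_{n + ⌊√n⌋·ν}^(d). Then P(A_n) ≤ (2n+1)^d · (2ν+1)^{d·⌊√n⌋} / ⌊√n⌋!, the series ∑_n P(A_n) converges, and consequently P(limsup A_n) = 0, i.e., almost surely only finitely many of the events A_n occur. -/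
open MeasureTheory ProbabilityTheory Filter Set

/-- The box Λ_n^(d) = {-n,...,n}^d. -/
def box (d n : ℕ) : Set (Site d) := {x | ∀ i, (x i).natAbs ≤ n}

/-! ### Auxiliary material -/

noncomputable def unif : Measure ℝ := volume.restrict (Set.Ioo 0 1)

instance : IsProbabilityMeasure unif := ⟨by simp [unif, Real.volume_Ioo]⟩

lemma measurableSet_strictAnti (m : ℕ) :
    MeasurableSet {u : Fin m → ℝ | StrictAnti u} := by
  have h : {u : Fin m → ℝ | StrictAnti u}
      = ⋂ (i : Fin m) (j : Fin m), {u | i < j → u j < u i} := by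
    ext u
    simp only [Set.mem_setOf_eq, Set.mem_iInter, StrictAnti]
  rw [h]
  refine MeasurableSet.iInter fun i => MeasurableSet.iInter fun j => ?_
  by_cases hij : i < j
  · simpa [hij] using measurableSet_lt (measurable_pi_apply j) (measurable_pi_apply i)
  · simp [hij]

lemma map_perm_pi (m : ℕ) (σ : Equiv.Perm (Fin m)) :
    Measure.map (fun u : Fin m → ℝ => u ∘ σ) (Measure.pi fun _ => unif)
      = Measure.pi fun _ => unif := by
  have h1 : ∀ (u : Fin m → ℝ) (i : Fin m),
      (MeasurableEquiv.piCongrLeft (fun _ : Fin m => ℝ) σ.symm) u i = u (σ i) := by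
    intro u i
    rw [MeasurableEquiv.coe_piCongrLeft]
    have h := Equiv.piCongrLeft_apply_apply (fun _ : Fin m => ℝ) σ.symm u (σ i)
    rwa [Equiv.symm_apply_apply] at h
  have h2 : (fun u : Fin m → ℝ => u ∘ σ)
      = ⇑(MeasurableEquiv.piCongrLeft (fun _ : Fin m => ℝ) σ.symm) := by
    funext u; funext i; exact (h1 u i).symm
  rw [h2]
  exact (measurePreserving_piCongrLeft (fun _ : Fin m => unif) σ.symm).map_eq

lemma pi_strictAnti_le (m : ℕ) :
    Measure.pi (fun _ : Fin m => unif) {u | StrictAnti u}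
      ≤ 1 / (m.factorial : ENNReal) := by
  set π := Measure.pi (fun _ : Fin m => unif) with hπ
  set S := {u : Fin m → ℝ | StrictAnti u} with hS
  have hmc : ∀ σ : Equiv.Perm (Fin m), Measurable fun u : Fin m → ℝ => u ∘ σ :=
    fun σ => measurable_pi_lambda _ fun i => measurable_pi_apply _
  have key : ∀ σ : Equiv.Perm (Fin m), π ((fun u : Fin m → ℝ => u ∘ σ) ⁻¹' S) = π S := by
    intro σ
    rw [← Measure.map_apply (hmc σ) (measurableSet_strictAnti m), map_perm_pi m σ]
  have disj : ((Finset.univ : Finset (Equiv.Perm (Fin m))) : Set (Equiv.Perm (Fin m))).PairwiseDisjoint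
      (fun σ => (fun u : Fin m → ℝ => u ∘ σ) ⁻¹' S) := by
    intro σ _ τ _ hστ
    refine Set.disjoint_left.2 fun u hu1 hu2 => ?_
    have h1 : StrictAnti (u ∘ σ) := hu1
    have h2 : StrictAnti (u ∘ τ) := hu2
    have hρ : StrictMono ⇑(τ.trans σ.symm) := by
      intro i j hij
      have h3 : u (τ j) < u (τ i) := h2 hij
      have h4 : ∀ a b : Fin m, u (σ a) < u (σ b) ↔ b < a := fun a b => h1.lt_iff_gt
      have := (h4 (σ.symm (τ j)) (σ.symm (τ i)))
      simp only [Equiv.apply_symm_apply] at this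
      exact (this.1 h3 : _)
    have hr : Set.range ⇑(τ.trans σ.symm) = Set.range (id : Fin m → Fin m) := by
      simp [Set.range_eq_univ.2 (τ.trans σ.symm).surjective]
    haveI : WellFoundedLT (Fin m) := inferInstance
    have hid : ⇑(τ.trans σ.symm) = (id : Fin m → Fin m) :=
      (StrictMono.range_inj hρ (strictMono_id (α := Fin m))).1 hr
    refine hστ (Equiv.ext fun i => ?_)
    have h6 := congrFun hid i
    simp only [Equiv.trans_apply, id_eq] at h6
    have h7 := congrArg σ h6
    rw [Equiv.apply_symm_apply] at h7
    exact h7.symm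
  have hsum : ∑ σ : Equiv.Perm (Fin m), π ((fun u : Fin m → ℝ => u ∘ σ) ⁻¹' S)
      = π (⋃ σ ∈ (Finset.univ : Finset (Equiv.Perm (Fin m))),
          (fun u : Fin m → ℝ => u ∘ σ) ⁻¹' S) :=
    (measure_biUnion_finset disj fun σ _ => (hmc σ) (measurableSet_strictAnti m)).symm
  have hle1 : ∑ σ : Equiv.Perm (Fin m), π ((fun u : Fin m → ℝ => u ∘ σ) ⁻¹' S) ≤ 1 := by
    rw [hsum]
    calc π _ ≤ π Set.univ := measure_mono (Set.subset_univ _)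
    _ = 1 := measure_univ
  have hcount : ∑ σ : Equiv.Perm (Fin m), π ((fun u : Fin m → ℝ => u ∘ σ) ⁻¹' S)
      = (m.factorial : ENNReal) * π S := by
    rw [Finset.sum_congr rfl fun σ _ => key σ, Finset.sum_const, Finset.card_univ,
      Fintype.card_perm, Fintype.card_fin, nsmul_eq_mul]
  rw [hcount] at hle1
  rw [ENNReal.le_div_iff_mul_le (Or.inl (by exact_mod_cast m.factorial_ne_zero))
    (Or.inl (ENNReal.natCast_ne_top _)), mul_comm]
  simpa using hle1

lemma joint_law {d m : ℕ} {Ω : Type} [MeasurableSpace Ω] (μ : Measure Ω)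
    [IsProbabilityMeasure μ] (X : Site d → Ω → ℝ)
    (hmeas : ∀ x, Measurable (X x))
    (hindep : iIndepFun X μ)
    (hunif : ∀ x, μ.map (X x) = unif)
    (q : Fin m → Site d) (hq : Function.Injective q) :
    μ.map (fun ω i => X (q i) ω) = Measure.pi fun _ : Fin m => unif := by
  refine (Measure.pi_eq (μ := fun _ : Fin m => unif) fun s hs => ?_).symm
  have hjm : Measurable fun ω (i : Fin m) => X (q i) ω :=
    measurable_pi_lambda _ fun i => hmeas (q i)
  rw [Measure.map_apply hjm (MeasurableSet.univ_pi hs)]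
  have hpre : (fun ω (i : Fin m) => X (q i) ω) ⁻¹' Set.pi Set.univ s
      = ⋂ i : Fin m, X (q i) ⁻¹' s i := by
    ext ω; simp [Set.mem_pi]
  rw [hpre]
  classical
  set F : Site d → Set ℝ := fun y => ⋂ (i : Fin m) (_ : q i = y), s i with hF
  have hFq : ∀ i, F (q i) = s i := by
    intro i
    apply Set.Subset.antisymm
    · intro a ha
      simp only [hF, Set.mem_iInter] at ha
      exact ha i rfl
    · intro a ha
      simp only [hF, Set.mem_iInter]
      intro i' h
      rwa [hq h]
  have hFmeas : ∀ y, MeasurableSet (F y) := fun y =>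
    MeasurableSet.iInter fun i => MeasurableSet.iInter fun _ => hs i
  have hind := hindep.measure_inter_preimage_eq_mul
    (Finset.image q Finset.univ) (sets := F) (fun y _ => hFmeas y)
  have hiInter : (⋂ y ∈ Finset.image q Finset.univ, X y ⁻¹' F y)
      = ⋂ i : Fin m, X (q i) ⁻¹' s i := by
    ext ω
    simp only [Set.mem_iInter, Finset.mem_image, Finset.mem_univ, true_and]
    constructor
    · intro h i
      have := h (q i) ⟨i, rfl⟩
      rwa [hFq i] at this
    · rintro h y ⟨i, rfl⟩
      rw [hFq i]; exact h i
  have hprod : ∏ y ∈ Finset.image q Finset.univ, μ (X y ⁻¹' F y)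
      = ∏ i : Fin m, unif (s i) := by
    rw [Finset.prod_image (fun i _ j _ h => hq h)]
    refine Finset.prod_congr rfl fun i _ => ?_
    rw [hFq i, ← Measure.map_apply (hmeas (q i)) (hs i), hunif (q i)]
  rw [hiInter, hprod] at hind
  exact hind

lemma event_bound {d k : ℕ} {Ω : Type} [MeasurableSpace Ω] (μ : Measure Ω)
    [IsProbabilityMeasure μ] (X : Site d → Ω → ℝ)
    (hmeas : ∀ x, Measurable (X x))
    (hindep : iIndepFun X μ)
    (hunif : ∀ x, μ.map (X x) = unif)
    (q : Fin (k + 1) → Site d) :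
    μ {ω | StrictAnti fun j => X (q j) ω} ≤ 1 / (k.factorial : ENNReal) := by
  by_cases hq : Function.Injective q
  · have hjm : Measurable fun ω (i : Fin (k + 1)) => X (q i) ω :=
      measurable_pi_lambda _ fun i => hmeas (q i)
    have h1 : μ {ω | StrictAnti fun j => X (q j) ω}
        = (μ.map fun ω (i : Fin (k + 1)) => X (q i) ω) {u | StrictAnti u} := by
      rw [Measure.map_apply hjm (measurableSet_strictAnti _)]
      rfl
    rw [h1, joint_law μ X hmeas hindep hunif q hq]
    refine le_trans (pi_strictAnti_le (k + 1)) ?_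
    exact ENNReal.div_le_div le_rfl (by exact_mod_cast Nat.factorial_le (Nat.le_succ k))
  · have : {ω | StrictAnti fun j => X (q j) ω} = (∅ : Set Ω) := by
      rw [Set.eq_empty_iff_forall_notMem]
      intro ω hω
      simp only [Function.Injective, not_forall] at hq
      obtain ⟨i, j, hqij, hij⟩ := hq
      have hf : Function.Injective fun j => X (q j) ω := (hω : StrictAnti _).injective
      exact hij (hf (by simp [hqij]))
    simp [this]

def stepext {d k : ℕ} (s : Fin k → Site d) : ℕ → Site d :=
  fun t => if h : t < k then s ⟨t, h⟩ else 0

def pathOf {d k : ℕ} (x : Site d) (s : Fin k → Site d) : Fin (k + 1) → Site d :=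
  fun j => x + ∑ t ∈ Finset.range j.val, stepext s t

lemma exists_path {d ν n : ℕ} (hν : 0 < ν) (ωf : Site d → ℝ)
    (h : ¬ armour ν ωf (box d n) ⊆ box d (n + Nat.sqrt n * ν)) :
    ∃ x ∈ box d n, ∃ s : Fin (Nat.sqrt n) → Site d,
      (∀ j i, ((s j) i).natAbs ≤ ν) ∧ StrictAnti fun j => ωf (pathOf x s j) := by
  set k := Nat.sqrt n with hk
  rw [Set.not_subset] at h
  obtain ⟨y, hy, hyout⟩ := h
  obtain ⟨x, hx, m', p, hp0, hplast, hpath, hanti⟩ := hy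
  have tel : ∀ (j : ℕ) (hj : j < m' + 1) (i : Fin d),
      ((p ⟨j, hj⟩ i) - (p 0 i)).natAbs ≤ j * ν := by
    intro j
    induction j with
    | zero => intro hj i; simp
    | succ j ih =>
      intro hj i
      have hjm : j < m' := by omega
      set a : Fin m' := ⟨j, hjm⟩ with ha
      have h1 : (p a.succ i - p a.castSucc i).natAbs ≤ ν := by
        refine le_trans ?_ (hpath a)
        exact Finset.le_sup (f := fun i => (p a.succ i - p a.castSucc i).natAbs)
          (Finset.mem_univ i)
      have h2 : ((p a.castSucc i) - (p 0 i)).natAbs ≤ j * ν := by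
        have : a.castSucc = (⟨j, by omega⟩ : Fin (m' + 1)) := rfl
        rw [this]; exact ih (by omega) i
      have hsucc : (⟨j + 1, hj⟩ : Fin (m' + 1)) = a.succ := rfl
      rw [hsucc]
      calc (p a.succ i - p 0 i).natAbs
          = ((p a.succ i - p a.castSucc i) + (p a.castSucc i - p 0 i)).natAbs := by ring_nf
        _ ≤ (p a.succ i - p a.castSucc i).natAbs + (p a.castSucc i - p 0 i).natAbs :=
            Int.natAbs_add_le _ _
        _ ≤ ν + j * ν := Nat.add_le_add h1 h2
        _ = (j + 1) * ν := by ring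
  have hyfar : ∃ i, n + k * ν < (y i).natAbs := by
    by_contra hc
    push_neg at hc
    exact hyout fun i => hc i
  obtain ⟨i0, hi0⟩ := hyfar
  have hxle : (x i0).natAbs ≤ n := hx i0
  have hlastval : (Fin.last m') = (⟨m', by omega⟩ : Fin (m' + 1)) := rfl
  have htel : ((y i0) - (x i0)).natAbs ≤ m' * ν := by
    have := tel m' (by omega) i0
    rwa [← hlastval, hplast, hp0] at this
  have hylow : (y i0).natAbs ≤ (y i0 - x i0).natAbs + (x i0).natAbs := by
    have := Int.natAbs_add_le (y i0 - x i0) (x i0)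
    simpa using this
  have hkm : k < m' := by
    have h3 : k * ν < m' * ν := by omega
    exact lt_of_mul_lt_mul_right h3 (Nat.zero_le ν)
  set q : Fin (k + 1) → Site d := fun j => p ⟨j.val, by omega⟩ with hqdef
  set s : Fin k → Site d := fun j => q j.succ - q j.castSucc with hsdef
  refine ⟨x, hx, s, ?_, ?_⟩
  · intro j i
    set a : Fin m' := ⟨j.val, lt_trans j.isLt hkm⟩ with ha
    have haq : q j.succ = p a.succ := rfl
    have haq2 : q j.castSucc = p a.castSucc := rfl
    have h1 : (p a.succ i - p a.castSucc i).natAbs ≤ ν := by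
      refine le_trans ?_ (hpath a)
      exact Finset.le_sup (f := fun i => (p a.succ i - p a.castSucc i).natAbs)
        (Finset.mem_univ i)
    simpa [hsdef, haq, haq2] using h1
  · have hpq : ∀ j : Fin (k + 1), pathOf x s j = q j := by
      have key : ∀ (jv : ℕ) (hjv : jv < k + 1), pathOf x s ⟨jv, hjv⟩ = q ⟨jv, hjv⟩ := by
        intro jv
        induction jv with
        | zero =>
          intro hjv
          have : q ⟨0, hjv⟩ = x := by
            have : q ⟨0, hjv⟩ = p 0 := rfl
            rw [this, hp0]
          rw [this]
          simp [pathOf]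
        | succ jv ih =>
          intro hjv
          have hjk : jv < k := by omega
          set b : Fin k := ⟨jv, hjk⟩ with hb
          have e1 : (⟨jv + 1, hjv⟩ : Fin (k + 1)) = b.succ := rfl
          have e2 : pathOf x s b.succ = pathOf x s b.castSucc + s b := by
            simp only [pathOf, Fin.val_succ, Fin.coe_castSucc, Finset.sum_range_succ]
            have : stepext s jv = s b := by
              simp [stepext, hjk, hb]
            rw [this]
            abel
          have e3 : pathOf x s b.castSucc = q b.castSucc := by
            have : b.castSucc = (⟨jv, by omega⟩ : Fin (k + 1)) := rfl
            rw [this]; exact ih (by omega)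
          rw [e1, e2, e3]
          funext i
          simp [hsdef]
      intro j
      have : j = ⟨j.val, j.isLt⟩ := rfl
      rw [this]; exact key j.val j.isLt
    have hqanti : StrictAnti fun j : Fin (k + 1) => ωf (q j) := by
      intro a b hab
      refine hanti ?_
      show (⟨a.val, _⟩ : Fin (m' + 1)) < ⟨b.val, _⟩
      simpa [Fin.mk_lt_mk] using hab
    have : (fun j : Fin (k + 1) => ωf (pathOf x s j)) = fun j => ωf (q j) := by
      funext j; rw [hpq j]
    rw [this]
    exact hqanti

lemma series_summable (d ν : ℕ) :
    Summable (fun n : ℕ =>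
      (((2 * n + 1) ^ d * (2 * ν + 1) ^ (d * Nat.sqrt n) : ℕ) : ℝ)
        / ((Nat.sqrt n).factorial : ℝ)) := by
  set B : ℝ := ((2 * ν + 1 : ℕ) : ℝ) ^ d with hB
  have hB0 : 0 ≤ B := by positivity
  set h : ℕ → ℝ := fun k =>
    (((2 * (k + 1) ^ 2 + 1) ^ d * (2 * ν + 1) ^ (d * k) : ℕ) : ℝ) / (k.factorial : ℝ)
    with hh
  set g : ℕ → ℝ := fun k => (2 * k + 1 : ℝ) * h k with hg
  have hh0 : ∀ k, 0 ≤ h k := fun k => by positivity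
  have hg0 : ∀ k, 0 ≤ g k := fun k => by positivity
  have hgsum : Summable g := by
    set C : ℝ := 3 ^ (d + 1) * ((2 * d + 2).factorial : ℝ) * Real.exp 1 with hC
    have hbound : ∀ k, g k ≤ C * (Real.exp 1 * B) ^ k / (k.factorial : ℝ) := by
      intro k
      have e1 : g k = ((2 * k + 1 : ℝ) * ((2 * (k + 1) ^ 2 + 1 : ℕ) : ℝ) ^ d * B ^ k)
          / (k.factorial : ℝ) := by
        rw [hg, hh, hB]
        push_cast
        rw [pow_mul]
        ring
      rw [e1, div_le_div_iff_of_pos_right (by positivity : (0:ℝ) < (k.factorial : ℝ))]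
      have h2 : (2 * (k : ℝ) + 1) * ((2 * (k + 1) ^ 2 + 1 : ℕ) : ℝ) ^ d
          ≤ (3 * ((k : ℝ) + 1) ^ 2) ^ (d + 1) := by
        have hk1 : (1 : ℝ) ≤ ((k : ℝ) + 1) ^ 2 := by nlinarith [Nat.cast_nonneg (α := ℝ) k]
        have l1 : 2 * (k : ℝ) + 1 ≤ 3 * ((k : ℝ) + 1) ^ 2 := by
          nlinarith [Nat.cast_nonneg (α := ℝ) k]
        have l2 : ((2 * (k + 1) ^ 2 + 1 : ℕ) : ℝ) ≤ 3 * ((k : ℝ) + 1) ^ 2 := by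
          push_cast; nlinarith [Nat.cast_nonneg (α := ℝ) k]
        have l2' : ((2 * (k + 1) ^ 2 + 1 : ℕ) : ℝ) ^ d ≤ (3 * ((k : ℝ) + 1) ^ 2) ^ d :=
          pow_le_pow_left₀ (by positivity) l2 d
        calc (2 * (k : ℝ) + 1) * ((2 * (k + 1) ^ 2 + 1 : ℕ) : ℝ) ^ d
            ≤ (3 * ((k : ℝ) + 1) ^ 2) * (3 * ((k : ℝ) + 1) ^ 2) ^ d :=
              mul_le_mul l1 l2' (by positivity) (by positivity)
          _ = (3 * ((k : ℝ) + 1) ^ 2) ^ (d + 1) := (pow_succ' _ _).symm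
      have h3 : (3 * ((k : ℝ) + 1) ^ 2) ^ (d + 1)
          = 3 ^ (d + 1) * (((k : ℝ) + 1) ^ (2 * d + 2)) := by
        rw [mul_pow, ← pow_mul]
        ring_nf
      have h4 : ((k : ℝ) + 1) ^ (2 * d + 2)
          ≤ ((2 * d + 2).factorial : ℝ) * Real.exp ((k : ℝ) + 1) := by
        have hx : (0 : ℝ) ≤ (k : ℝ) + 1 := by positivity
        have hsum := Real.sum_le_exp_of_nonneg hx (2 * d + 2 + 1)
        have hterm : ((k : ℝ) + 1) ^ (2 * d + 2) / ((2 * d + 2).factorial : ℝ)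
            ≤ Real.exp ((k : ℝ) + 1) := by
          refine le_trans ?_ hsum
          exact Finset.single_le_sum (f := fun i => ((k : ℝ) + 1) ^ i / (i.factorial : ℝ))
            (fun i _ => by positivity) (Finset.mem_range.2 (Nat.lt_succ_self (2 * d + 2)))
        rw [div_le_iff₀ (by positivity)] at hterm
        linarith [hterm]
      have h5 : Real.exp ((k : ℝ) + 1) = Real.exp 1 * (Real.exp 1) ^ k := by
        rw [Real.exp_add, ← Real.exp_nat_mul]
        ring_nf
      calc (2 * (k : ℝ) + 1) * ((2 * (k + 1) ^ 2 + 1 : ℕ) : ℝ) ^ d * B ^ k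
          ≤ (3 * ((k : ℝ) + 1) ^ 2) ^ (d + 1) * B ^ k :=
            mul_le_mul_of_nonneg_right h2 (by positivity)
        _ = 3 ^ (d + 1) * (((k : ℝ) + 1) ^ (2 * d + 2)) * B ^ k := by rw [h3]
        _ ≤ 3 ^ (d + 1) * (((2 * d + 2).factorial : ℝ) * Real.exp ((k : ℝ) + 1)) * B ^ k := by
            have := mul_le_mul_of_nonneg_left h4 (a := (3 : ℝ) ^ (d + 1)) (by positivity)
            exact mul_le_mul_of_nonneg_right this (by positivity)
        _ = C * (Real.exp 1 * B) ^ k := by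
            rw [h5, hC, mul_pow]
            ring
    refine Summable.of_nonneg_of_le hg0 hbound ?_
    have := (Real.summable_pow_div_factorial (Real.exp 1 * B)).mul_left C
    simpa [mul_div_assoc] using this
  refine summable_of_sum_range_le (c := ∑' k, g k) (fun n => by positivity) ?_
  intro N
  have hmap : ∀ n ∈ Finset.range N, Nat.sqrt n ∈ Finset.range N :=
    fun n hn => Finset.mem_range.2 (lt_of_le_of_lt (Nat.sqrt_le_self n) (Finset.mem_range.1 hn))
  rw [← Finset.sum_fiberwise_of_maps_to hmap]
  have hfiber : ∀ k ∈ Finset.range N,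
      (∑ n ∈ Finset.range N with Nat.sqrt n = k,
        (((2 * n + 1) ^ d * (2 * ν + 1) ^ (d * Nat.sqrt n) : ℕ) : ℝ)
          / ((Nat.sqrt n).factorial : ℝ)) ≤ g k := by
    intro k _
    have hsub : (Finset.range N).filter (fun n => Nat.sqrt n = k)
        ⊆ Finset.Icc (k * k) (k * k + 2 * k) := by
      intro n hn
      have hk := (Finset.mem_filter.1 hn).2
      have h1 : k * k ≤ n := hk ▸ Nat.sqrt_le n
      have h2 : n < (k + 1) * (k + 1) := hk ▸ Nat.lt_succ_sqrt n
      have h3 : (k + 1) * (k + 1) = k * k + 2 * k + 1 := by ring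
      exact Finset.mem_Icc.2 ⟨h1, by omega⟩
    have hcard : ((Finset.range N).filter (fun n => Nat.sqrt n = k)).card ≤ 2 * k + 1 := by
      have := Finset.card_le_card hsub
      rwa [Nat.card_Icc, show k * k + 2 * k + 1 - k * k = 2 * k + 1 by omega] at this
    have hterm : ∀ n ∈ (Finset.range N).filter (fun n => Nat.sqrt n = k),
        (((2 * n + 1) ^ d * (2 * ν + 1) ^ (d * Nat.sqrt n) : ℕ) : ℝ)
          / ((Nat.sqrt n).factorial : ℝ) ≤ h k := by
      intro n hn
      have hk := (Finset.mem_filter.1 hn).2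
      rw [hk, hh]
      rw [div_le_div_iff_of_pos_right (by positivity : (0:ℝ) < (k.factorial : ℝ))]
      refine Nat.cast_le.2 (Nat.mul_le_mul_right _ ?_)
      refine Nat.pow_le_pow_left ?_ d
      have h2 : n < (k + 1) * (k + 1) := hk ▸ Nat.lt_succ_sqrt n
      nlinarith
    calc (∑ n ∈ Finset.range N with Nat.sqrt n = k,
          (((2 * n + 1) ^ d * (2 * ν + 1) ^ (d * Nat.sqrt n) : ℕ) : ℝ)
            / ((Nat.sqrt n).factorial : ℝ))
        ≤ ((Finset.range N).filter (fun n => Nat.sqrt n = k)).card • h k :=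
          Finset.sum_le_card_nsmul _ _ _ hterm
      _ ≤ (2 * k + 1) • h k := by
          exact nsmul_le_nsmul_left (hh0 k) hcard
      _ = g k := by
          rw [hg, nsmul_eq_mul]
          push_cast
          ring
  calc (∑ k ∈ Finset.range N, ∑ n ∈ Finset.range N with Nat.sqrt n = k,
        (((2 * n + 1) ^ d * (2 * ν + 1) ^ (d * Nat.sqrt n) : ℕ) : ℝ)
          / ((Nat.sqrt n).factorial : ℝ))
      ≤ ∑ k ∈ Finset.range N, g k := Finset.sum_le_sum hfiber
    _ ≤ ∑' k, g k := Summable.sum_le_tsum _ (fun k _ => hg0 k) hgsum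

/-- with A_n the event that the armour of Λ_n is not contained in
Λ_{n+⌊√n⌋ν}, one has P(A_n) ≤ (2n+1)^d (2ν+1)^{d⌊√n⌋}/⌊√n⌋!, the series ∑ P(A_n)
converges, and P(limsup A_n) = 0. -/
theorem armour_boundary_borel_cantelli {d : ℕ} (ν : ℕ) (hd : 0 < d) (hν : 0 < ν)
    {Ω : Type} [MeasurableSpace Ω] (μ : Measure Ω) [IsProbabilityMeasure μ]
    (X : Site d → Ω → ℝ)
    (hmeas : ∀ x, Measurable (X x))
    (hindep : iIndepFun X μ)
    (hunif : ∀ x, μ.map (X x) = volume.restrict (Set.Ioo (0 : ℝ) 1))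
    (A : ℕ → Set Ω)
    (hA : ∀ n, A n =
      {ω | ¬ armour ν (fun x => X x ω) (box d n) ⊆ box d (n + Nat.sqrt n * ν)}) :
    (∀ n : ℕ, μ (A n) ≤
        ((2 * n + 1) ^ d : ENNReal) * ((2 * ν + 1) ^ (d * Nat.sqrt n) : ENNReal)
          / ((Nat.sqrt n).factorial : ENNReal)) ∧
    (∑' n : ℕ, μ (A n)) < ⊤ ∧
    μ (Filter.limsup A Filter.atTop) = 0 := by
  classical
  have hunif' : ∀ x, μ.map (X x) = unif := hunif
  have part1 : ∀ n : ℕ, μ (A n) ≤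
      ((2 * n + 1) ^ d : ENNReal) * ((2 * ν + 1) ^ (d * Nat.sqrt n) : ENNReal)
        / ((Nat.sqrt n).factorial : ENNReal) := by
    intro n
    set k := Nat.sqrt n with hk
    set B : Finset (Site d) :=
      Fintype.piFinset fun _ : Fin d => Finset.Icc (-(n : ℤ)) (n : ℤ) with hBdef
    set T : Finset (Fin k → Site d) :=
      Fintype.piFinset fun _ : Fin k =>
        (Fintype.piFinset fun _ : Fin d => Finset.Icc (-(ν : ℤ)) (ν : ℤ)) with hTdef
    have cover : A n ⊆ ⋃ x ∈ B, ⋃ s ∈ T,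
        {ω | StrictAnti fun j => X (pathOf x s j) ω} := by
      intro ω hω
      rw [hA n] at hω
      obtain ⟨x, hx, s, hs, hanti⟩ := exists_path hν (fun z => X z ω) hω
      have hxB : x ∈ B := by
        rw [hBdef, Fintype.mem_piFinset]
        intro i
        rw [Finset.mem_Icc]
        have := hx i
        omega
      have hsT : s ∈ T := by
        rw [hTdef, Fintype.mem_piFinset]
        intro j
        rw [Fintype.mem_piFinset]
        intro i
        rw [Finset.mem_Icc]
        have := hs j i
        omega
      exact Set.mem_biUnion hxB (Set.mem_biUnion hsT hanti)
    have bound : ∀ (x : Site d) (s : Fin k → Site d),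
        μ {ω | StrictAnti fun j => X (pathOf x s j) ω} ≤ 1 / (k.factorial : ENNReal) :=
      fun x s => event_bound μ X hmeas hindep hunif' (pathOf x s)
    have hBcard : B.card = (2 * n + 1) ^ d := by
      rw [hBdef, Fintype.card_piFinset]
      have : (Finset.Icc (-(n : ℤ)) (n : ℤ)).card = 2 * n + 1 := by
        rw [Int.card_Icc]
        omega
      simp [this]
    have hTcard : T.card = (2 * ν + 1) ^ (d * k) := by
      rw [hTdef, Fintype.card_piFinset]
      have h1 : (Finset.Icc (-(ν : ℤ)) (ν : ℤ)).card = 2 * ν + 1 := by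
        rw [Int.card_Icc]
        omega
      have h2 : (Fintype.piFinset fun _ : Fin d => Finset.Icc (-(ν : ℤ)) (ν : ℤ)).card
          = (2 * ν + 1) ^ d := by
        rw [Fintype.card_piFinset]
        simp [h1]
      simp [h2, ← pow_mul]
    calc μ (A n)
        ≤ μ (⋃ x ∈ B, ⋃ s ∈ T, {ω | StrictAnti fun j => X (pathOf x s j) ω}) :=
          measure_mono cover
      _ ≤ ∑ x ∈ B, μ (⋃ s ∈ T, {ω | StrictAnti fun j => X (pathOf x s j) ω}) :=
          measure_biUnion_finset_le _ _
      _ ≤ ∑ x ∈ B, ∑ s ∈ T, μ {ω | StrictAnti fun j => X (pathOf x s j) ω} :=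
          Finset.sum_le_sum fun x _ => measure_biUnion_finset_le _ _
      _ ≤ ∑ x ∈ B, ∑ s ∈ T, 1 / (k.factorial : ENNReal) :=
          Finset.sum_le_sum fun x _ => Finset.sum_le_sum fun s _ => bound x s
      _ = (B.card : ENNReal) * ((T.card : ENNReal) * (1 / (k.factorial : ENNReal))) := by
          simp [Finset.sum_const, nsmul_eq_mul, mul_assoc]
      _ = ((2 * n + 1) ^ d : ENNReal) * ((2 * ν + 1) ^ (d * k) : ENNReal)
          / ((k.factorial : ℕ) : ENNReal) := by
          rw [hBcard, hTcard]
          push_cast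
          rw [mul_one_div, ← mul_div_assoc]
  have part2 : (∑' n : ℕ, μ (A n)) < ⊤ := by
    set c : ℕ → NNReal := fun n =>
      (((2 * n + 1) ^ d * (2 * ν + 1) ^ (d * Nat.sqrt n) : ℕ) : NNReal)
        / (((Nat.sqrt n).factorial : ℕ) : NNReal) with hc
    have hcsum : Summable c := by
      rw [← NNReal.summable_coe]
      have hxx : (fun n => (c n : ℝ)) = fun n =>
          (((2 * n + 1) ^ d * (2 * ν + 1) ^ (d * Nat.sqrt n) : ℕ) : ℝ)
            / ((Nat.sqrt n).factorial : ℝ) := by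
        funext n
        rw [hc]
        push_cast
        rfl
      rw [hxx]
      exact series_summable d ν
    have hle : ∀ n, μ (A n) ≤ (c n : ENNReal) := by
      intro n
      refine (part1 n).trans (le_of_eq ?_)
      rw [hc, ENNReal.coe_div (by exact_mod_cast (Nat.sqrt n).factorial_ne_zero)]
      push_cast
      rfl
    calc (∑' n : ℕ, μ (A n)) ≤ ∑' n : ℕ, (c n : ENNReal) := ENNReal.tsum_le_tsum hle
      _ < ⊤ := lt_top_iff_ne_top.2 (ENNReal.tsum_coe_ne_top_iff_summable.2 hcsum)
  exact ⟨part1, part2, measure_limsup_atTop_eq_zero part2.ne⟩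
end
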